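/- Let p, s ∈ H with s ∉ [p] and suppose s ∈ ℂ_j for some purely imaginary unit quaternion j. Writing p = u + j_p v with p_j = u + j v ∈ ℂ_j, the function φ_s(p) = (p² - 2Re(s)p + |s|²)⁻² (p - s̄)^{2⋆} satisfies |φ_s(p)| ≤ |p_j - s|⁻² + |p̄_j - s|⁻² ≤ 2 (dist([p], s))⁻². -/

import Mathlib

open Quaternion

/-- The 2-sphere `[p]` associated to a quaternion `p`. -/
def quatSphere (p : ℍ[ℝ]) : Set ℍ[ℝ] :=
  {q : ℍ[ℝ] | q.re = p.re ∧ ‖q.im‖ = ‖p.im‖}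

/-- The complex slice `ℂ_j`. -/
def sliceSet (j : ℍ[ℝ]) : Set ℍ[ℝ] :=
  {q : ℍ[ℝ] | ∃ x y : ℝ, q = ((x : ℝ) : ℍ[ℝ]) + y • j}

/-- `φ_s(p) = (p² - 2 Re(s) p + |s|²)⁻² (p - s̄)^{2⋆}`. -/
noncomputable def phiFun (s p : ℍ[ℝ]) : ℍ[ℝ] :=
  ((p ^ 2 - 2 * ((s.re : ℝ) : ℍ[ℝ]) * p + ((‖s‖ ^ 2 : ℝ) : ℍ[ℝ])) ^ 2)⁻¹ *
    (p ^ 2 - 2 * p * star s + (star s) ^ 2)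

/-!
`φ_s` is a slice function: at `p = x + y I` it equals `α + I β` with `α, β` independent of the
unit `I`. Evaluating at `I = ±j` recovers `α` and `j β` from `φ_s(p_j)` and `φ_s(p̄_j)`, whence
`|φ_s(p)| ≤ |α| + |β| ≤ |φ_s(p_j)| + |φ_s(p̄_j)|`. On the slice `ℂ_j` everything commutes and
`φ_s(ζ) = (ζ - s)⁻²`; finally `p_j, p̄_j ∈ [p]`, so both lie at distance at least `dist([p], s)`
from `s`.
-/

theorem norm_add_norm_le_norm_add_add_norm_sub {E : Type*} [SeminormedAddCommGroup E]
    [NormedSpace ℝ E] (a b : E) : ‖a‖ + ‖b‖ ≤ ‖a + b‖ + ‖a - b‖ := by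
  have ha : ‖(2 : ℝ) • a‖ ≤ ‖a + b‖ + ‖a - b‖ := by
    rw [show (2 : ℝ) • a = (a + b) + (a - b) by module]; exact norm_add_le _ _
  have hb : ‖(2 : ℝ) • b‖ ≤ ‖a + b‖ + ‖a - b‖ := by
    rw [show (2 : ℝ) • b = (a + b) - (a - b) by module]; exact norm_sub_le _ _
  rw [norm_smul, Real.norm_two] at ha hb
  linarith

section NormedDivisionRing

variable {R : Type*} [NormedDivisionRing R]

theorem norm_eq_one_of_mul_self_eq_neg_one {I : R} (hI : I * I = -1) : ‖I‖ = 1 := by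
  have h : ‖I‖ * ‖I‖ = 1 := by rw [← norm_mul, hI, norm_neg, norm_one]
  nlinarith [norm_nonneg I]

theorem norm_add_mul_le_of_norm_eq [NormedAlgebra ℝ R] {α β I J : R} (hIJ : ‖I‖ = ‖J‖) :
    ‖α + I * β‖ ≤ ‖α + J * β‖ + ‖α - J * β‖ :=
  calc ‖α + I * β‖ ≤ ‖α‖ + ‖J * β‖ := by
        rw [norm_mul J, ← hIJ, ← norm_mul]; exact norm_add_le _ _
    _ ≤ ‖α + J * β‖ + ‖α - J * β‖ := norm_add_norm_le_norm_add_add_norm_sub _ _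

end NormedDivisionRing

section ImaginaryUnit

variable {A : Type*} [Ring A] [Algebra ℝ A] {I : A}

theorem Complex.liftAux_mul_add_mul (hI : I * I = -1) (c : ℂ) (E G : A) :
    Complex.liftAux I hI c * (E + I * G) = (c.re • E - c.im • G) + I * (c.re • G + c.im • E) := by
  have hIIG : I * (I * G) = -G := by rw [← mul_assoc, hI, neg_one_mul]
  simp only [Complex.liftAux_apply, Algebra.algebraMap_eq_smul_one, add_mul, mul_add,
    smul_mul_assoc, one_mul, mul_smul_comm, hIIG]
  module

theorem sq_sub_two_mul_add_sq_of_mul_self_eq_neg_one (hI : I * I = -1) (x y : ℝ) (a : A) :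
    (algebraMap ℝ A x + y • I) ^ 2 - 2 * (algebraMap ℝ A x + y • I) * a + a ^ 2
      = (algebraMap ℝ A (x ^ 2 - y ^ 2) - (2 * x) • a + a ^ 2)
        + I * (algebraMap ℝ A (2 * x * y) - (2 * y) • a) := by
  have h2 : (2 : A) = (2 : ℝ) • 1 := by norm_num [two_smul]
  simp only [sq, h2, Algebra.algebraMap_eq_smul_one, add_mul, mul_add, smul_mul_assoc, smul_add,
    one_mul, mul_smul_comm, hI, mul_one, mul_sub]
  module

end ImaginaryUnit

theorem Metric.one_div_dist_sq_le_one_div_infDist_sq {X : Type*} [PseudoMetricSpace X]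
    {S : Set X} {x z : X} (hS : IsClosed S) (hx : x ∉ S) (hz : z ∈ S) :
    1 / dist z x ^ 2 ≤ 1 / Metric.infDist x S ^ 2 := by
  have hpos : 0 < Metric.infDist x S := (hS.notMem_iff_infDist_pos ⟨z, hz⟩).mp hx
  have hle : Metric.infDist x S ≤ dist z x := dist_comm x z ▸ Metric.infDist_le_dist_of_mem hz
  exact one_div_le_one_div_of_le (by positivity) (pow_le_pow_left₀ hpos.le hle 2)

namespace Quaternion

theorem mul_self_eq_neg_one_of_re_eq_zero_of_norm_eq_one {j : ℍ[ℝ]} (hj : j.re = 0)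
    (hj1 : ‖j‖ = 1) : j * j = -1 := by
  rw [← neg_neg (j * j), ← neg_mul, ← star_eq_neg.mpr hj, star_mul_self,
    normSq_eq_norm_mul_self, hj1, mul_one, coe_one]

theorem exists_mul_self_eq_neg_one_eq_re_add_smul (p : ℍ[ℝ]) :
    ∃ I : ℍ[ℝ], I * I = -1 ∧ p = (p.re : ℍ[ℝ]) + ‖p.im‖ • I := by
  rcases eq_or_ne p.im 0 with him | him
  · refine ⟨ofComplex Complex.I, by rw [← map_mul, Complex.I_mul_I, map_neg, map_one], ?_⟩
    simpa [him] using (re_add_im p).symm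
  · have hn : ‖p.im‖ ≠ 0 := norm_ne_zero_iff.mpr him
    refine ⟨‖p.im‖⁻¹ • p.im, ?_, by rw [smul_smul, mul_inv_cancel₀ hn, one_smul, re_add_im]⟩
    rw [smul_mul_smul_comm, ← sq p.im, im_sq, normSq_eq_norm_mul_self, smul_neg, smul_coe,
      mul_mul_mul_comm, inv_mul_cancel₀ hn, one_mul, coe_one]

theorem isClosed_quatSphere (p : ℍ[ℝ]) : IsClosed (quatSphere p) :=
  (isClosed_eq continuous_re continuous_const).inter
    (isClosed_eq (continuous_norm.comp continuous_im) continuous_const)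

theorem coe_re_add_norm_im_smul_mem_quatSphere (p : ℍ[ℝ]) {J : ℍ[ℝ]} (hJ : J.re = 0)
    (hJ1 : ‖J‖ = 1) :
    (p.re : ℍ[ℝ]) + ‖p.im‖ • J ∈ quatSphere p := by
  have hJim : J.im = J := by ext <;> simp [hJ]
  refine ⟨by simp [hJ], ?_⟩
  simp [hJim, norm_smul, hJ1]

theorem coe_eq_liftAux {I : ℍ[ℝ]} (hI : I * I = -1) (r : ℝ) :
    (r : ℍ[ℝ]) = Complex.liftAux I hI r := by
  rw [← algebraMap_def, ← Complex.coe_algebraMap, AlgHom.commutes]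

theorem exists_phiFun_coe_add_smul_eq_add_mul (s : ℍ[ℝ]) (x y : ℝ) :
    ∃ α β : ℍ[ℝ], ∀ I : ℍ[ℝ], I * I = -1 → phiFun s ((x : ℍ[ℝ]) + y • I) = α + I * β := by
  set ζ : ℂ := ⟨x, y⟩
  set c : ℂ := ((ζ ^ 2 - 2 * (s.re : ℂ) * ζ + ((‖s‖ ^ 2 : ℝ) : ℂ)) ^ 2)⁻¹
  set E : ℍ[ℝ] := ((x ^ 2 - y ^ 2 : ℝ) : ℍ[ℝ]) - (2 * x) • star s + star s ^ 2
  set G : ℍ[ℝ] := ((2 * x * y : ℝ) : ℍ[ℝ]) - (2 * y) • star s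
  refine ⟨c.re • E - c.im • G, c.re • G + c.im • E, fun I hI => ?_⟩
  set q : ℍ[ℝ] := (x : ℍ[ℝ]) + y • I
  have hq : q = Complex.liftAux I hI ζ := by
    rw [Complex.liftAux_apply, algebraMap_def]
  have hden : ((q ^ 2 - 2 * (s.re : ℍ[ℝ]) * q + ((‖s‖ ^ 2 : ℝ) : ℍ[ℝ])) ^ 2)⁻¹
      = Complex.liftAux I hI c := by
    simp only [hq, coe_eq_liftAux hI, c, map_inv₀, map_pow, map_add, map_sub, map_mul, map_ofNat]
  have hnum : q ^ 2 - 2 * q * star s + star s ^ 2 = E + I * G := by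
    simpa only [algebraMap_def] using sq_sub_two_mul_add_sq_of_mul_self_eq_neg_one hI x y (star s)
  rw [phiFun, hden, hnum, Complex.liftAux_mul_add_mul]

theorem norm_phiFun_le_norm_phiFun_add_norm_phiFun {j : ℍ[ℝ]} (hjj : j * j = -1) (p s : ℍ[ℝ]) :
    ‖phiFun s p‖ ≤ ‖phiFun s ((p.re : ℍ[ℝ]) + ‖p.im‖ • j)‖
      + ‖phiFun s ((p.re : ℍ[ℝ]) - ‖p.im‖ • j)‖ := by
  obtain ⟨I, hI, hpI⟩ := exists_mul_self_eq_neg_one_eq_re_add_smul p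
  obtain ⟨α, β, hαβ⟩ := exists_phiFun_coe_add_smul_eq_add_mul s p.re ‖p.im‖
  have hφp : phiFun s p = α + I * β := by rw [hpI]; exact hαβ I hI
  rw [hφp, hαβ j hjj, sub_eq_add_neg, ← smul_neg, hαβ (-j) (by rwa [neg_mul_neg]), neg_mul,
    ← sub_eq_add_neg]
  exact norm_add_mul_le_of_norm_eq
    (by rw [norm_eq_one_of_mul_self_eq_neg_one hI, norm_eq_one_of_mul_self_eq_neg_one hjj])

section Slice

variable {j : ℍ[ℝ]} (hjj : j * j = -1)

theorem sliceSet_eq_range : sliceSet j = Set.range (Complex.liftAux j hjj) := by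
  ext q
  simp only [sliceSet, Set.mem_ofPred_eq, Set.mem_range, Complex.liftAux_apply, algebraMap_def]
  exact ⟨fun ⟨x, y, h⟩ => ⟨⟨x, y⟩, h.symm⟩, fun ⟨z, h⟩ => ⟨z.re, z.im, h.symm⟩⟩

variable (hj : j.re = 0)
include hj

theorem star_liftAux (z : ℂ) :
    star (Complex.liftAux j hjj z) = Complex.liftAux j hjj (starRingEnd ℂ z) := by
  simp [Complex.liftAux_apply, algebraMap_def, star_eq_neg.mpr hj]

theorem re_liftAux (z : ℂ) : (Complex.liftAux j hjj z).re = z.re := by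
  simp [Complex.liftAux_apply, algebraMap_def, hj]

theorem norm_liftAux (z : ℂ) : ‖Complex.liftAux j hjj z‖ = ‖z‖ := by
  have h : normSq (Complex.liftAux j hjj z) = Complex.normSq z := by
    apply coe_injective
    rw [← self_mul_star, star_liftAux hjj hj, ← map_mul, Complex.mul_conj,
      Complex.liftAux_apply, algebraMap_def]
    simp
  rw [normSq_eq_norm_mul_self, Complex.normSq_eq_norm_sq, sq] at h
  exact (mul_self_inj (norm_nonneg _) (norm_nonneg _)).mp h

/-- On `ℂ_j` the denominator factors as `(ζ - s)(ζ - s̄)` and the numerator is `(ζ - s̄)²`. -/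
theorem phiFun_liftAux (σ ζ : ℂ) (h : ζ ≠ starRingEnd ℂ σ) :
    phiFun (Complex.liftAux j hjj σ) (Complex.liftAux j hjj ζ)
      = Complex.liftAux j hjj (((ζ - σ) ^ 2)⁻¹) := by
  have hfac : ζ ^ 2 - 2 * (σ.re : ℂ) * ζ + ((‖σ‖ ^ 2 : ℝ) : ℂ)
      = (ζ - σ) * (ζ - starRingEnd ℂ σ) := by
    have h1 : ((σ.re : ℝ) : ℂ) * 2 = σ + starRingEnd ℂ σ := by
      rw [Complex.add_conj]; push_cast; ring
    have h2 : ((‖σ‖ ^ 2 : ℝ) : ℂ) = σ * starRingEnd ℂ σ := by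
      rw [Complex.mul_conj, Complex.sq_norm]
    linear_combination (-ζ) * h1 + h2
  have hnum : ζ ^ 2 - 2 * ζ * starRingEnd ℂ σ + starRingEnd ℂ σ ^ 2
      = (ζ - starRingEnd ℂ σ) ^ 2 := by
    ring
  have hne : (ζ - starRingEnd ℂ σ) ^ 2 ≠ 0 := pow_ne_zero 2 (sub_ne_zero.mpr h)
  calc phiFun (Complex.liftAux j hjj σ) (Complex.liftAux j hjj ζ)
      = Complex.liftAux j hjj (((ζ ^ 2 - 2 * (σ.re : ℂ) * ζ + ((‖σ‖ ^ 2 : ℝ) : ℂ)) ^ 2)⁻¹ *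
          (ζ ^ 2 - 2 * ζ * starRingEnd ℂ σ + starRingEnd ℂ σ ^ 2)) := by
        simp only [phiFun, re_liftAux hjj hj, norm_liftAux hjj hj, star_liftAux hjj hj,
          coe_eq_liftAux hjj, map_mul, map_inv₀, map_pow, map_add, map_sub, map_ofNat]
    _ = Complex.liftAux j hjj (((ζ - σ) ^ 2)⁻¹) := by
        rw [hfac, hnum, mul_pow, mul_inv, mul_assoc, inv_mul_cancel₀ hne, mul_one]

include hjj in
theorem norm_phiFun_of_mem_sliceSet {s z : ℍ[ℝ]} (hs : s ∈ sliceSet j) (hz : z ∈ sliceSet j)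
    (hzs : z ≠ star s) : ‖phiFun s z‖ = 1 / ‖z - s‖ ^ 2 := by
  rw [sliceSet_eq_range hjj] at hs hz
  obtain ⟨σ, rfl⟩ := hs
  obtain ⟨ζ, rfl⟩ := hz
  have h : ζ ≠ starRingEnd ℂ σ := by
    rintro rfl; exact hzs (star_liftAux hjj hj σ).symm
  rw [phiFun_liftAux hjj hj σ ζ h, ← map_sub, norm_liftAux hjj hj, norm_liftAux hjj hj,
    norm_inv, norm_pow, one_div]

end Slice

end Quaternion

/-- For `s ∉ [p]` with `s ∈ ℂ_j`, writing `p_j = Re p + |Im p| j` and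
`p̄_j = Re p - |Im p| j`, one has
`|φ_s(p)| ≤ |p_j - s|⁻² + |p̄_j - s|⁻² ≤ 2 dist([p], s)⁻²`. -/
theorem phi_slice_bound (j : ℍ[ℝ]) (hj : j.re = 0) (hj1 : ‖j‖ = 1)
    (p s : ℍ[ℝ]) (hs : s ∉ quatSphere p) (hsj : s ∈ sliceSet j) :
    ‖phiFun s p‖
        ≤ 1 / ‖(((p.re : ℝ) : ℍ[ℝ]) + ‖p.im‖ • j) - s‖ ^ 2
          + 1 / ‖(((p.re : ℝ) : ℍ[ℝ]) - ‖p.im‖ • j) - s‖ ^ 2 ∧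
      1 / ‖(((p.re : ℝ) : ℍ[ℝ]) + ‖p.im‖ • j) - s‖ ^ 2
          + 1 / ‖(((p.re : ℝ) : ℍ[ℝ]) - ‖p.im‖ • j) - s‖ ^ 2
        ≤ 2 / (Metric.infDist s (quatSphere p)) ^ 2 := by
  have hjj : j * j = -1 := mul_self_eq_neg_one_of_re_eq_zero_of_norm_eq_one hj hj1
  set z : ℍ[ℝ] := (p.re : ℍ[ℝ]) + ‖p.im‖ • j
  set w : ℍ[ℝ] := (p.re : ℍ[ℝ]) - ‖p.im‖ • j
  have hz_slice : z ∈ sliceSet j := ⟨p.re, ‖p.im‖, rfl⟩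
  have hw_slice : w ∈ sliceSet j := ⟨p.re, -‖p.im‖, by rw [neg_smul]; exact sub_eq_add_neg _ _⟩
  have hz_mem : z ∈ quatSphere p := coe_re_add_norm_im_smul_mem_quatSphere p hj hj1
  have hw_mem : w ∈ quatSphere p := by
    simpa only [smul_neg, ← sub_eq_add_neg] using
      coe_re_add_norm_im_smul_mem_quatSphere p (J := -j) (by simp [hj]) (by rwa [norm_neg])
  have hstar : star z = w := by
    rw [star_add, Quaternion.star_smul, star_coe, star_eq_neg.mpr hj, smul_neg]
    exact (sub_eq_add_neg _ _).symm
  have hzs : z ≠ star s := fun h => hs (by rwa [← star_star s, ← h, hstar])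
  have hws : w ≠ star s := fun h => hs (by rwa [← star_star s, ← h, ← hstar, star_star])
  constructor
  · rw [← norm_phiFun_of_mem_sliceSet hjj hj hsj hz_slice hzs,
      ← norm_phiFun_of_mem_sliceSet hjj hj hsj hw_slice hws]
    exact norm_phiFun_le_norm_phiFun_add_norm_phiFun hjj p s
  · have hdz := Metric.one_div_dist_sq_le_one_div_infDist_sq (isClosed_quatSphere p) hs hz_mem
    have hdw := Metric.one_div_dist_sq_le_one_div_infDist_sq (isClosed_quatSphere p) hs hw_mem
    rw [dist_eq_norm] at hdz hdw
    exact (add_le_add hdz hdw).trans_eq (by ring)
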